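/- Pierce's subject-reduction counterexample for one-step β-reduction in system B: in the context B = x : (σ₁→σ₁→τ) ∩ (σ₂→σ₂→τ), y : ρ → (σ₁∪σ₂), z : ρ, both x((Iy)z)((Iy)z) and x(yz)(yz) are typable with τ (where I = λw.w), but the intermediate one-step reducts x(yz)((Iy)z) and x((Iy)z)(yz) are not typable with τ in B. -/

import Mathlib

set_option autoImplicit false

namespace LFDelta

/-- Equivalence closure of a relation (conversion). -/
inductive Conv {α : Type} (r : α → α → Prop) : α → α → Prop
| rel {a b : α} : r a b → Conv r a b
| refl (a : α) : Conv r a a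
| symm {a b : α} : Conv r a b → Conv r b a
| trans {a b c : α} : Conv r a b → Conv r b c → Conv r a c

/-- Types of the intersection-union type assignment system B
    (with ⊤, used only for the extended system B⁺). -/
inductive BTy : Type
| atom (a : ℕ)
| top
| arr (σ τ : BTy)
| inter (σ τ : BTy)
| union (σ τ : BTy)
deriving DecidableEq

/-- ω-free types of system B. -/
def BTy.OmegaFree : BTy → Prop
| .atom _ => True
| .top => False
| .arr σ τ => σ.OmegaFree ∧ τ.OmegaFree
| .inter σ τ => σ.OmegaFree ∧ τ.OmegaFree
| .union σ τ => σ.OmegaFree ∧ τ.OmegaFree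

/-- Untyped λ-terms (de Bruijn), possibly containing constants
    (the constants c, c_× and c_{|σ|} are used for translations). -/
inductive Lam : Type
| var (n : ℕ)
| app (M N : Lam)
| lam (M : Lam)
| const (c : ℕ)
| cx
| cty (σ : BTy)
deriving DecidableEq

namespace Lam

/-- Pure λ-terms: no constants. -/
def Pure : Lam → Prop
| .var _ => True
| .app M N => Pure M ∧ Pure N
| .lam M => Pure M
| _ => False

/-- Lift (shift) free variables ≥ c by one. -/
def lift (c : ℕ) : Lam → Lam
| .var n => if n < c then .var n else .var (n+1)
| .app M N => .app (lift c M) (lift c N)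
| .lam M => .lam (lift (c+1) M)
| .const k => .const k
| .cx => .cx
| .cty σ => .cty σ

/-- Substitute N for variable k. -/
def subst (k : ℕ) (N : Lam) : Lam → Lam
| .var n => if n < k then .var n else if n = k then (lift 0)^[k] N else .var (n-1)
| .app M₁ M₂ => .app (subst k N M₁) (subst k N M₂)
| .lam M => .lam (subst (k+1) N M)
| .const c => .const c
| .cx => .cx
| .cty σ => .cty σ

/-- One-step β-reduction. -/
inductive StepB : Lam → Lam → Prop
| beta {M N : Lam} : StepB (.app (.lam M) N) (subst 0 N M)
| appL {M M' N : Lam} : StepB M M' → StepB (.app M N) (.app M' N)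
| appR {M N N' : Lam} : StepB N N' → StepB (.app M N) (.app M N')
| lam {M M' : Lam} : StepB M M' → StepB (.lam M) (.lam M')

/-- One-step η-reduction. -/
inductive StepE : Lam → Lam → Prop
| eta {M : Lam} : StepE (.lam (.app (lift 0 M) (.var 0))) M
| appL {M M' N : Lam} : StepE M M' → StepE (.app M N) (.app M' N)
| appR {M N N' : Lam} : StepE N N' → StepE (.app M N) (.app M N')
| lam {M M' : Lam} : StepE M M' → StepE (.lam M) (.lam M')

/-- β-convertibility. -/
def BetaEq : Lam → Lam → Prop := Conv StepB

/-- βη-convertibility. -/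
def BetaEtaEq : Lam → Lam → Prop := Conv (fun a b => StepB a b ∨ StepE a b)

/-- Strong β-normalization. -/
def SNBeta (M : Lam) : Prop := Acc (fun a b => StepB b a) M

end Lam

/-- The subtype theory Ξ of system B without the ω-axioms (5) and (13),
    i.e. axioms/rules (1)-(4), (6)-(12), (14). -/
inductive SubB : BTy → BTy → Prop
| idemInter {σ : BTy} : SubB σ (.inter σ σ)                                  -- (1)
| idemUnion {σ : BTy} : SubB (.union σ σ) σ                                  -- (2)
| interL {σ τ : BTy} : SubB (.inter σ τ) σ                                   -- (3)
| interR {σ τ : BTy} : SubB (.inter σ τ) τ                                   -- (3)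
| unionL {σ τ : BTy} : SubB σ (.union σ τ)                                   -- (4)
| unionR {σ τ : BTy} : SubB τ (.union σ τ)                                   -- (4)
| refl {σ : BTy} : SubB σ σ                                                  -- (6)
| monoInter {σ₁ σ₂ τ₁ τ₂ : BTy} :
    SubB σ₁ σ₂ → SubB τ₁ τ₂ → SubB (.inter σ₁ τ₁) (.inter σ₂ τ₂)             -- (7)
| monoUnion {σ₁ σ₂ τ₁ τ₂ : BTy} :
    SubB σ₁ σ₂ → SubB τ₁ τ₂ → SubB (.union σ₁ τ₁) (.union σ₂ τ₂)             -- (8)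
| trans {σ τ ρ : BTy} : SubB σ τ → SubB τ ρ → SubB σ ρ                        -- (9)
| dist {σ τ ρ : BTy} :
    SubB (.inter σ (.union τ ρ)) (.union (.inter σ τ) (.inter σ ρ))          -- (10)
| arrInter {σ τ ρ : BTy} :
    SubB (.inter (.arr σ τ) (.arr σ ρ)) (.arr σ (.inter τ ρ))                -- (11)
| arrUnion {σ τ ρ : BTy} :
    SubB (.inter (.arr σ ρ) (.arr τ ρ)) (.arr (.union σ τ) ρ)                -- (12)
| arrow {σ₁ σ₂ τ₁ τ₂ : BTy} :
    SubB σ₂ σ₁ → SubB τ₁ τ₂ → SubB (.arr σ₁ τ₁) (.arr σ₂ τ₂)                  -- (14)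

/-- The subtype theory Ξ' (Ξ without (5), (10), (13)), parametrized by
    additional axioms `ax`. -/
inductive Xi' (ax : BTy → BTy → Prop) : BTy → BTy → Prop
| ax {σ τ : BTy} : ax σ τ → Xi' ax σ τ
| idemInter {σ : BTy} : Xi' ax σ (.inter σ σ)
| idemUnion {σ : BTy} : Xi' ax (.union σ σ) σ
| interL {σ τ : BTy} : Xi' ax (.inter σ τ) σ
| interR {σ τ : BTy} : Xi' ax (.inter σ τ) τ
| unionL {σ τ : BTy} : Xi' ax σ (.union σ τ)
| unionR {σ τ : BTy} : Xi' ax τ (.union σ τ)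
| refl {σ : BTy} : Xi' ax σ σ
| monoInter {σ₁ σ₂ τ₁ τ₂ : BTy} :
    Xi' ax σ₁ σ₂ → Xi' ax τ₁ τ₂ → Xi' ax (.inter σ₁ τ₁) (.inter σ₂ τ₂)
| monoUnion {σ₁ σ₂ τ₁ τ₂ : BTy} :
    Xi' ax σ₁ σ₂ → Xi' ax τ₁ τ₂ → Xi' ax (.union σ₁ τ₁) (.union σ₂ τ₂)
| trans {σ τ ρ : BTy} : Xi' ax σ τ → Xi' ax τ ρ → Xi' ax σ ρ
| arrInter {σ τ ρ : BTy} :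
    Xi' ax (.inter (.arr σ τ) (.arr σ ρ)) (.arr σ (.inter τ ρ))
| arrUnion {σ τ ρ : BTy} :
    Xi' ax (.inter (.arr σ ρ) (.arr τ ρ)) (.arr (.union σ τ) ρ)
| arrow {σ₁ σ₂ τ₁ τ₂ : BTy} :
    Xi' ax σ₂ σ₁ → Xi' ax τ₁ τ₂ → Xi' ax (.arr σ₁ τ₁) (.arr σ₂ τ₂)

/-- Type assignment of system B (Curry style), extended with constant
    typing axioms `ξ` and the constants c_× and c_{|σ|} of B⁺.
    With `ξ := fun _ _ => False` and on pure terms this is exactly system B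
    without ω. -/
inductive BPlus (ξ : ℕ → BTy → Prop) : List BTy → Lam → BTy → Prop
| var {Γ : List BTy} {n : ℕ} {σ : BTy} :
    Γ[n]? = some σ → BPlus ξ Γ (.var n) σ
| const {Γ : List BTy} {c : ℕ} {σ : BTy} : ξ c σ → BPlus ξ Γ (.const c) σ
| cx {Γ : List BTy} : BPlus ξ Γ .cx (.arr .top (.arr .top .top))
| cty {Γ : List BTy} {σ : BTy} :
    BPlus ξ Γ (.cty σ) (.arr .top (.arr (.arr σ .top) .top))
| abs {Γ : List BTy} {M : Lam} {σ τ : BTy} :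
    BPlus ξ (σ :: Γ) M τ → BPlus ξ Γ (.lam M) (.arr σ τ)
| app {Γ : List BTy} {M N : Lam} {σ τ : BTy} :
    BPlus ξ Γ M (.arr σ τ) → BPlus ξ Γ N σ → BPlus ξ Γ (.app M N) τ
| interI {Γ : List BTy} {M : Lam} {σ τ : BTy} :
    BPlus ξ Γ M σ → BPlus ξ Γ M τ → BPlus ξ Γ M (.inter σ τ)
| interEl {Γ : List BTy} {M : Lam} {σ τ : BTy} :
    BPlus ξ Γ M (.inter σ τ) → BPlus ξ Γ M σ
| interEr {Γ : List BTy} {M : Lam} {σ τ : BTy} :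
    BPlus ξ Γ M (.inter σ τ) → BPlus ξ Γ M τ
| unionIl {Γ : List BTy} {M : Lam} {σ τ : BTy} :
    BPlus ξ Γ M σ → BPlus ξ Γ M (.union σ τ)
| unionIr {Γ : List BTy} {M : Lam} {σ τ : BTy} :
    BPlus ξ Γ M τ → BPlus ξ Γ M (.union σ τ)
| unionE {Γ : List BTy} {M N : Lam} {σ τ ρ : BTy} :
    BPlus ξ (σ :: Γ) M ρ → BPlus ξ (τ :: Γ) M ρ → BPlus ξ Γ N (.union σ τ) →
    BPlus ξ Γ (Lam.subst 0 N M) ρ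
| sub {Γ : List BTy} {M : Lam} {σ τ : BTy} :
    BPlus ξ Γ M σ → SubB σ τ → BPlus ξ Γ M τ

/-- The pseudo-terms of LF_Δ: kinds, families and objects in a single syntax
    (the typing judgments single out each syntactic class). -/
inductive Tm : Type
| type                        -- the kind Type
| pi (σ τ : Tm)               -- Πx:σ.K and Πx:σ.τ
| rarr (σ τ : Tm)             -- relevant family σ →ʳ τ
| inter (σ τ : Tm)            -- intersection family
| union (σ τ : Tm)            -- union family
| const (c : ℕ)               -- constants (family- and object-level)
| var (n : ℕ)                 -- variables (de Bruijn)
| lam (σ Δ : Tm)              -- λx:σ.Δ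
| app (Δ₁ Δ₂ : Tm)            -- application (of families and of objects)
| rlam (σ Δ : Tm)             -- relevant abstraction λʳx:σ.Δ
| rapp (Δ₁ Δ₂ : Tm)           -- relevant application
| pair (Δ₁ Δ₂ : Tm)           -- strong pair ⟨Δ₁,Δ₂⟩
| copair (Δ₁ Δ₂ : Tm)         -- strong co-pair [Δ₁,Δ₂]
| prl (Δ : Tm)                -- left projection
| prr (Δ : Tm)                -- right projection
| inl (σ Δ : Tm)              -- injection in_l^σ Δ
| inr (σ Δ : Tm)              -- injection in_r^σ Δ
deriving DecidableEq

namespace Tm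

/-- Lift free variables ≥ c by one. -/
def lift (c : ℕ) : Tm → Tm
| .type => .type
| .pi σ τ => .pi (lift c σ) (lift (c+1) τ)
| .rarr σ τ => .rarr (lift c σ) (lift c τ)
| .inter σ τ => .inter (lift c σ) (lift c τ)
| .union σ τ => .union (lift c σ) (lift c τ)
| .const k => .const k
| .var n => if n < c then .var n else .var (n+1)
| .lam σ Δ => .lam (lift c σ) (lift (c+1) Δ)
| .app Δ₁ Δ₂ => .app (lift c Δ₁) (lift c Δ₂)
| .rlam σ Δ => .rlam (lift c σ) (lift (c+1) Δ)
| .rapp Δ₁ Δ₂ => .rapp (lift c Δ₁) (lift c Δ₂)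
| .pair Δ₁ Δ₂ => .pair (lift c Δ₁) (lift c Δ₂)
| .copair Δ₁ Δ₂ => .copair (lift c Δ₁) (lift c Δ₂)
| .prl Δ => .prl (lift c Δ)
| .prr Δ => .prr (lift c Δ)
| .inl σ Δ => .inl (lift c σ) (lift c Δ)
| .inr σ Δ => .inr (lift c σ) (lift c Δ)

/-- Substitute the object N for variable k. -/
def subst (k : ℕ) (N : Tm) : Tm → Tm
| .type => .type
| .pi σ τ => .pi (subst k N σ) (subst (k+1) N τ)
| .rarr σ τ => .rarr (subst k N σ) (subst k N τ)
| .inter σ τ => .inter (subst k N σ) (subst k N τ)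
| .union σ τ => .union (subst k N σ) (subst k N τ)
| .const c => .const c
| .var n => if n < k then .var n else if n = k then (lift 0)^[k] N else .var (n-1)
| .lam σ Δ => .lam (subst k N σ) (subst (k+1) N Δ)
| .app Δ₁ Δ₂ => .app (subst k N Δ₁) (subst k N Δ₂)
| .rlam σ Δ => .rlam (subst k N σ) (subst (k+1) N Δ)
| .rapp Δ₁ Δ₂ => .rapp (subst k N Δ₁) (subst k N Δ₂)
| .pair Δ₁ Δ₂ => .pair (subst k N Δ₁) (subst k N Δ₂)
| .copair Δ₁ Δ₂ => .copair (subst k N Δ₁) (subst k N Δ₂)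
| .prl Δ => .prl (subst k N Δ)
| .prr Δ => .prr (subst k N Δ)
| .inl σ Δ => .inl (subst k N σ) (subst k N Δ)
| .inr σ Δ => .inr (subst k N σ) (subst k N Δ)

end Tm

/-- The essence function: compositionally erases all type annotations and
    proof-functional constructs (on non-objects it returns a dummy value). -/
def essence : Tm → Lam
| .var n => .var n
| .const c => .const c
| .lam _ Δ => .lam (essence Δ)
| .rlam _ Δ => .lam (essence Δ)
| .app Δ₁ Δ₂ => .app (essence Δ₁) (essence Δ₂)
| .rapp _ Δ₂ => essence Δ₂
| .pair Δ₁ _ => essence Δ₁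
| .copair Δ₁ _ => essence Δ₁
| .prl Δ => essence Δ
| .prr Δ => essence Δ
| .inl _ Δ => essence Δ
| .inr _ Δ => essence Δ
| .type => .const 0
| .pi _ _ => .const 0
| .rarr _ _ => .const 0
| .inter _ _ => .const 0
| .union _ _ => .const 0

/-- One-step reduction →_Δ of LF_Δ. Congruence rules are standard, except
    that the components of strong pairs and co-pairs must reduce in parallel,
    keeping identical essences. -/
inductive Step : Tm → Tm → Prop
| beta {σ Δ₁ Δ₂ : Tm} : Step (.app (.lam σ Δ₁) Δ₂) (Tm.subst 0 Δ₂ Δ₁)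
| rbeta {σ Δ₁ Δ₂ : Tm} : Step (.rapp (.rlam σ Δ₁) Δ₂) (Tm.subst 0 Δ₂ Δ₁)
| prl {Δ₁ Δ₂ : Tm} : Step (.prl (.pair Δ₁ Δ₂)) Δ₁
| prr {Δ₁ Δ₂ : Tm} : Step (.prr (.pair Δ₁ Δ₂)) Δ₂
| coInl {Δ₁ Δ₂ σ Δ₃ : Tm} :
    Step (.app (.copair Δ₁ Δ₂) (.inl σ Δ₃)) (.app Δ₁ Δ₃)
| coInr {Δ₁ Δ₂ σ Δ₃ : Tm} :
    Step (.app (.copair Δ₁ Δ₂) (.inr σ Δ₃)) (.app Δ₂ Δ₃)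
| piL {σ σ' τ : Tm} : Step σ σ' → Step (.pi σ τ) (.pi σ' τ)
| piR {σ τ τ' : Tm} : Step τ τ' → Step (.pi σ τ) (.pi σ τ')
| rarrL {σ σ' τ : Tm} : Step σ σ' → Step (.rarr σ τ) (.rarr σ' τ)
| rarrR {σ τ τ' : Tm} : Step τ τ' → Step (.rarr σ τ) (.rarr σ τ')
| interL {σ σ' τ : Tm} : Step σ σ' → Step (.inter σ τ) (.inter σ' τ)
| interR {σ τ τ' : Tm} : Step τ τ' → Step (.inter σ τ) (.inter σ τ')
| unionL {σ σ' τ : Tm} : Step σ σ' → Step (.union σ τ) (.union σ' τ)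
| unionR {σ τ τ' : Tm} : Step τ τ' → Step (.union σ τ) (.union σ τ')
| lamL {σ σ' Δ : Tm} : Step σ σ' → Step (.lam σ Δ) (.lam σ' Δ)
| lamR {σ Δ Δ' : Tm} : Step Δ Δ' → Step (.lam σ Δ) (.lam σ Δ')
| rlamL {σ σ' Δ : Tm} : Step σ σ' → Step (.rlam σ Δ) (.rlam σ' Δ)
| rlamR {σ Δ Δ' : Tm} : Step Δ Δ' → Step (.rlam σ Δ) (.rlam σ Δ')
| appL {Δ₁ Δ₁' Δ₂ : Tm} : Step Δ₁ Δ₁' → Step (.app Δ₁ Δ₂) (.app Δ₁' Δ₂)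
| appR {Δ₁ Δ₂ Δ₂' : Tm} : Step Δ₂ Δ₂' → Step (.app Δ₁ Δ₂) (.app Δ₁ Δ₂')
| rappL {Δ₁ Δ₁' Δ₂ : Tm} : Step Δ₁ Δ₁' → Step (.rapp Δ₁ Δ₂) (.rapp Δ₁' Δ₂)
| rappR {Δ₁ Δ₂ Δ₂' : Tm} : Step Δ₂ Δ₂' → Step (.rapp Δ₁ Δ₂) (.rapp Δ₁ Δ₂')
| prlC {Δ Δ' : Tm} : Step Δ Δ' → Step (.prl Δ) (.prl Δ')
| prrC {Δ Δ' : Tm} : Step Δ Δ' → Step (.prr Δ) (.prr Δ')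
| inlL {σ σ' Δ : Tm} : Step σ σ' → Step (.inl σ Δ) (.inl σ' Δ)
| inlR {σ Δ Δ' : Tm} : Step Δ Δ' → Step (.inl σ Δ) (.inl σ Δ')
| inrL {σ σ' Δ : Tm} : Step σ σ' → Step (.inr σ Δ) (.inr σ' Δ)
| inrR {σ Δ Δ' : Tm} : Step Δ Δ' → Step (.inr σ Δ) (.inr σ Δ')
| pairC {Δ₁ Δ₁' Δ₂ Δ₂' : Tm} :
    Step Δ₁ Δ₁' → Step Δ₂ Δ₂' → essence Δ₁' = essence Δ₂' →
    Step (.pair Δ₁ Δ₂) (.pair Δ₁' Δ₂')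
| copairC {Δ₁ Δ₁' Δ₂ Δ₂' : Tm} :
    Step Δ₁ Δ₁' → Step Δ₂ Δ₂' → essence Δ₁' = essence Δ₂' →
    Step (.copair Δ₁ Δ₂) (.copair Δ₁' Δ₂')

/-- Definitional equality =_Δ : the symmetric reflexive transitive closure
    of →_Δ. -/
def DefEq : Tm → Tm → Prop := Conv Step

/-- Strong normalization w.r.t. →_Δ. -/
def SNTm (t : Tm) : Prop := Acc (fun a b => Step b a) t

/-- Signature entries: kind declarations a:K and type declarations c:σ. -/
inductive SigEntry : Type
| kd (a : ℕ) (K : Tm)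
| ty (c : ℕ) (σ : Tm)
deriving DecidableEq

abbrev Sig := List SigEntry
abbrev Ctx := List Tm

/-- c is declared in the signature. -/
def inDom (S : Sig) (c : ℕ) : Prop :=
  (∃ K, SigEntry.kd c K ∈ S) ∨ (∃ σ, SigEntry.ty c σ ∈ S)

/-- Context lookup, with the appropriate lifting. -/
inductive VarTy : Ctx → ℕ → Tm → Prop
| zero {Γ : Ctx} {σ : Tm} : VarTy (σ :: Γ) 0 (Tm.lift 0 σ)
| succ {Γ : Ctx} {n : ℕ} {σ τ : Tm} :
    VarTy Γ n σ → VarTy (τ :: Γ) (n+1) (Tm.lift 0 σ)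

mutual
/-- Σ is a valid signature. -/
inductive SigOk : Sig → Prop
| nil : SigOk []
| kd {S : Sig} {a : ℕ} {K : Tm} :
    SigOk S → KindOk S [] K → ¬ inDom S a → SigOk (.kd a K :: S)
| ty {S : Sig} {c : ℕ} {σ : Tm} :
    SigOk S → FamTy S [] σ .type → ¬ inDom S c → SigOk (.ty c σ :: S)

/-- Γ is a valid context in Σ. -/
inductive CtxOk : Sig → Ctx → Prop
| nil {S : Sig} : SigOk S → CtxOk S []
| cons {S : Sig} {Γ : Ctx} {σ : Tm} :
    CtxOk S Γ → FamTy S Γ σ .type → CtxOk S (σ :: Γ)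

/-- K is a kind in Γ and Σ. -/
inductive KindOk : Sig → Ctx → Tm → Prop
| type {S : Sig} {Γ : Ctx} : CtxOk S Γ → KindOk S Γ .type
| pi {S : Sig} {Γ : Ctx} {σ K : Tm} :
    FamTy S Γ σ .type → KindOk S (σ :: Γ) K → KindOk S Γ (.pi σ K)

/-- σ has kind K in Γ and Σ. -/
inductive FamTy : Sig → Ctx → Tm → Tm → Prop
| const {S : Sig} {Γ : Ctx} {a : ℕ} {K : Tm} :
    CtxOk S Γ → SigEntry.kd a K ∈ S → FamTy S Γ (.const a) K
| pi {S : Sig} {Γ : Ctx} {σ τ : Tm} :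
    FamTy S Γ σ .type → FamTy S (σ :: Γ) τ .type → FamTy S Γ (.pi σ τ) .type
| app {S : Sig} {Γ : Ctx} {σ τ K Δ : Tm} :
    FamTy S Γ σ (.pi τ K) → ObjTy S Γ Δ τ →
    FamTy S Γ (.app σ Δ) (Tm.subst 0 Δ K)
| rarr {S : Sig} {Γ : Ctx} {σ τ : Tm} :
    FamTy S Γ σ .type → FamTy S Γ τ .type → FamTy S Γ (.rarr σ τ) .type
| inter {S : Sig} {Γ : Ctx} {σ τ : Tm} :
    FamTy S Γ σ .type → FamTy S Γ τ .type → FamTy S Γ (.inter σ τ) .type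
| union {S : Sig} {Γ : Ctx} {σ τ : Tm} :
    FamTy S Γ σ .type → FamTy S Γ τ .type → FamTy S Γ (.union σ τ) .type
| conv {S : Sig} {Γ : Ctx} {σ K₁ K₂ : Tm} :
    FamTy S Γ σ K₁ → KindOk S Γ K₂ → DefEq K₁ K₂ → FamTy S Γ σ K₂

/-- Δ has type σ in Γ and Σ. -/
inductive ObjTy : Sig → Ctx → Tm → Tm → Prop
| const {S : Sig} {Γ : Ctx} {c : ℕ} {σ : Tm} :
    CtxOk S Γ → SigEntry.ty c σ ∈ S → ObjTy S Γ (.const c) σ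
| var {S : Sig} {Γ : Ctx} {n : ℕ} {σ : Tm} :
    CtxOk S Γ → VarTy Γ n σ → ObjTy S Γ (.var n) σ
| lam {S : Sig} {Γ : Ctx} {σ τ Δ : Tm} :
    ObjTy S (σ :: Γ) Δ τ → ObjTy S Γ (.lam σ Δ) (.pi σ τ)
| app {S : Sig} {Γ : Ctx} {σ τ Δ₁ Δ₂ : Tm} :
    ObjTy S Γ Δ₁ (.pi σ τ) → ObjTy S Γ Δ₂ σ →
    ObjTy S Γ (.app Δ₁ Δ₂) (Tm.subst 0 Δ₂ τ)
| rlam {S : Sig} {Γ : Ctx} {σ τ Δ : Tm} :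
    ObjTy S (σ :: Γ) Δ (Tm.lift 0 τ) →
    Lam.BetaEtaEq (essence Δ) (.var 0) →
    ObjTy S Γ (.rlam σ Δ) (.rarr σ τ)
| rapp {S : Sig} {Γ : Ctx} {σ τ Δ₁ Δ₂ : Tm} :
    ObjTy S Γ Δ₁ (.rarr σ τ) → ObjTy S Γ Δ₂ σ → ObjTy S Γ (.rapp Δ₁ Δ₂) τ
| pair {S : Sig} {Γ : Ctx} {σ τ Δ₁ Δ₂ : Tm} :
    ObjTy S Γ Δ₁ σ → ObjTy S Γ Δ₂ τ →
    Lam.BetaEtaEq (essence Δ₁) (essence Δ₂) →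
    ObjTy S Γ (.pair Δ₁ Δ₂) (.inter σ τ)
| prl {S : Sig} {Γ : Ctx} {σ τ Δ : Tm} :
    ObjTy S Γ Δ (.inter σ τ) → ObjTy S Γ (.prl Δ) σ
| prr {S : Sig} {Γ : Ctx} {σ τ Δ : Tm} :
    ObjTy S Γ Δ (.inter σ τ) → ObjTy S Γ (.prr Δ) τ
| inl {S : Sig} {Γ : Ctx} {σ τ Δ : Tm} :
    ObjTy S Γ Δ σ → FamTy S Γ (.union σ τ) .type →
    ObjTy S Γ (.inl τ Δ) (.union σ τ)
| inr {S : Sig} {Γ : Ctx} {σ τ Δ : Tm} :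
    ObjTy S Γ Δ τ → FamTy S Γ (.union σ τ) .type →
    ObjTy S Γ (.inr σ Δ) (.union σ τ)
| copair {S : Sig} {Γ : Ctx} {σ τ ρ Δ₁ Δ₂ : Tm} :
    ObjTy S Γ Δ₁
      (.pi σ (Tm.subst 0 (.inl (Tm.lift 0 τ) (.var 0)) (Tm.lift 1 ρ))) →
    ObjTy S Γ Δ₂
      (.pi τ (Tm.subst 0 (.inr (Tm.lift 0 σ) (.var 0)) (Tm.lift 1 ρ))) →
    FamTy S (.union σ τ :: Γ) ρ .type →
    Lam.BetaEtaEq (essence Δ₁) (essence Δ₂) →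
    ObjTy S Γ (.copair Δ₁ Δ₂) (.pi (.union σ τ) ρ)
| conv {S : Sig} {Γ : Ctx} {σ τ Δ : Tm} :
    ObjTy S Γ Δ σ → FamTy S Γ τ .type → DefEq σ τ → ObjTy S Γ Δ τ
end

/-- The dependency-erasing translation |·| on families and kinds. -/
def eraseTy : Tm → BTy
| .type => .top
| .pi σ τ => .arr (eraseTy σ) (eraseTy τ)
| .rarr σ τ => .arr (eraseTy σ) (eraseTy τ)
| .inter σ τ => .inter (eraseTy σ) (eraseTy τ)
| .union σ τ => .union (eraseTy σ) (eraseTy τ)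
| .const a => .atom a
| .app σ _ => eraseTy σ
| _ => .top

/-- The forgetful translation ‖·‖ of LF_Δ objects and families into pure
    λ-terms with constants, flattening type annotations into redexes. -/
def tr : Tm → Lam
| .type => .const 0
| .pi σ τ => .app (.app (.cty (eraseTy σ)) (tr σ)) (.lam (tr τ))
| .rarr σ τ => .app (.app .cx (tr σ)) (tr τ)
| .inter σ τ => .app (.app .cx (tr σ)) (tr τ)
| .union σ τ => .app (.app .cx (tr σ)) (tr τ)
| .const c => .const c
| .var n => .var n
| .lam σ Δ => .app (.lam (.lam (Lam.lift 1 (tr Δ)))) (tr σ)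
| .rlam σ Δ => .app (.lam (.lam (Lam.lift 1 (tr Δ)))) (tr σ)
| .app Δ₁ Δ₂ => .app (tr Δ₁) (tr Δ₂)
| .rapp Δ₁ Δ₂ => .app (tr Δ₁) (tr Δ₂)
| .pair Δ₁ _ => tr Δ₁
| .copair Δ₁ _ => tr Δ₁
| .prl Δ => tr Δ
| .prr Δ => tr Δ
| .inl σ Δ => .app (.lam (Lam.lift 0 (tr Δ))) (tr σ)
| .inr σ Δ => .app (.lam (Lam.lift 0 (tr Δ))) (tr σ)

/-- Constant typing axioms of B⁺ induced by a signature. -/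
def sigXi (S : Sig) : ℕ → BTy → Prop :=
  fun c τ => (∃ σ, SigEntry.ty c σ ∈ S ∧ τ = eraseTy σ) ∨
             (∃ K, SigEntry.kd c K ∈ S ∧ τ = eraseTy K)

/-- Embedding of (non-dependent, relevance-free) B types as LF_Δ families. -/
def toFam : BTy → Tm
| .atom a => .const a
| .top => .const 0
| .arr σ τ => .pi (toFam σ) (Tm.lift 0 (toFam τ))
| .inter σ τ => .inter (toFam σ) (toFam τ)
| .union σ τ => .union (toFam σ) (toFam τ)


/-!
The positive half is two instances of (∪E) with `M = x v v`. For the negative half we interpret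
B in an applicative structure with a non-extensional λ: typing is sound for any such structure in
which abstractions inhabit the arrow types their bodies justify, and evaluation commutes with
substitution, so (∪E) puts one and the same value into every hole of `M`. In the finite structure
`Pierce.model`, `y` and `I y` have exactly the same types, yet `y z` denotes a witness of `σ₁` and
`(I y) z` one of `σ₂`; `x` applied to one of each yields an element outside `τ`.
-/

/-- No β-law `app (lam f) d = f d` is required: soundness only needs `AbsClosed`. -/
structure LamModel (D : Type) where
  app : D → D → D
  lam : (D → D) → D
  const : ℕ → D
  cx : D
  cty : BTy → D
  atom : ℕ → Set D

namespace LamModel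

variable {D : Type} (M : LamModel D)

def den : BTy → Set D
  | .atom a => M.atom a
  | .top => Set.univ
  | .arr σ τ => {d | Set.MapsTo (M.app d) (den σ) (den τ)}
  | .inter σ τ => den σ ∩ den τ
  | .union σ τ => den σ ∪ den τ

def extend (d : D) (θ : ℕ → D) : ℕ → D
  | 0 => d
  | n + 1 => θ n

def eval : Lam → (ℕ → D) → D
  | .var n, θ => θ n
  | .app P Q, θ => M.app (eval P θ) (eval Q θ)
  | .lam P, θ => M.lam fun d => eval P (extend d θ)
  | .const c, _ => M.const c
  | .cx, _ => M.cx
  | .cty σ, _ => M.cty σ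

def AbsClosed : Prop :=
  ∀ (σ τ : BTy) (f : D → D), Set.MapsTo f (M.den σ) (M.den τ) → M.lam f ∈ M.den (.arr σ τ)

def Satisfies (Γ : List BTy) (θ : ℕ → D) : Prop :=
  ∀ n σ, Γ[n]? = some σ → θ n ∈ M.den σ

theorem den_subset_of_subB {σ τ : BTy} (h : SubB σ τ) : M.den σ ⊆ M.den τ := by
  induction h with
  | idemInter => exact fun _ h => ⟨h, h⟩
  | idemUnion => exact Set.union_subset le_rfl le_rfl
  | interL => exact fun _ h => h.1
  | interR => exact fun _ h => h.2
  | unionL => exact fun _ h => Or.inl h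
  | unionR => exact fun _ h => Or.inr h
  | refl => exact le_rfl
  | monoInter _ _ ih₁ ih₂ => exact Set.inter_subset_inter ih₁ ih₂
  | monoUnion _ _ ih₁ ih₂ => exact Set.union_subset_union ih₁ ih₂
  | trans _ _ ih₁ ih₂ => exact ih₁.trans ih₂
  | dist => exact (Set.inter_union_distrib_left (M.den _) _ _).subset
  | arrInter => exact fun _ h _ he => ⟨h.1 he, h.2 he⟩
  | arrUnion => exact fun _ h _ he => he.elim (fun he => h.1 he) (fun he => h.2 he)
  | arrow _ _ ih₁ ih₂ => exact fun _ h _ he => ih₂ (h (ih₁ he))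

theorem eval_lift (P : Lam) (c : ℕ) (θ : ℕ → D) :
    M.eval (P.lift c) θ = M.eval P (fun n => θ (if n < c then n else n + 1)) := by
  induction P generalizing c θ with
  | var n => by_cases h : n < c <;> simp [Lam.lift, eval, h]
  | app P Q ihP ihQ => simp [Lam.lift, eval, ihP, ihQ]
  | lam P ih =>
    simp only [Lam.lift, eval, ih]
    congr 1; funext d; congr 1; funext n
    rcases n with _ | n
    · rfl
    · by_cases h : n < c <;> simp [extend, h]
  | _ => rfl

theorem eval_lift_iterate (k : ℕ) (N : Lam) (θ : ℕ → D) :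
    M.eval ((Lam.lift 0)^[k] N) θ = M.eval N (fun m => θ (m + k)) := by
  induction k generalizing N θ with
  | zero => rfl
  | succ k ih =>
    rw [Function.iterate_succ_apply', eval_lift, ih]
    rfl

theorem eval_subst (P : Lam) (k : ℕ) (N : Lam) (θ : ℕ → D) :
    M.eval (Lam.subst k N P) θ =
      M.eval P (fun n => if n < k then θ n
        else if n = k then M.eval N (fun m => θ (m + k)) else θ (n - 1)) := by
  induction P generalizing k θ with
  | var n =>
    by_cases h₁ : n < k
    · simp [Lam.subst, eval, h₁]
    · by_cases h₂ : n = k <;> simp [Lam.subst, eval, h₁, h₂, eval_lift_iterate]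
  | app P Q ihP ihQ => simp [Lam.subst, eval, ihP, ihQ]
  | lam P ih =>
    simp only [Lam.subst, eval, ih]
    congr 1; funext d; congr 1; funext n
    rcases n with _ | _ | n
    · rfl
    · rcases k with _ | k <;> simp [extend]
    · by_cases h₁ : n + 1 < k <;> by_cases h₂ : n + 1 = k <;> simp [extend, h₁, h₂]
  | _ => rfl

theorem eval_subst_zero (P N : Lam) (θ : ℕ → D) :
    M.eval (Lam.subst 0 N P) θ = M.eval P (extend (M.eval N θ) θ) := by
  rw [eval_subst]
  congr 1; funext n
  cases n <;> rfl

theorem Satisfies.extend {Γ : List BTy} {θ : ℕ → D} (hθ : M.Satisfies Γ θ) {σ : BTy} {d : D}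
    (hd : d ∈ M.den σ) : M.Satisfies (σ :: Γ) (LamModel.extend d θ) := by
  rintro (_ | n) τ hn
  · cases Option.some.inj hn
    exact hd
  · exact hθ n τ hn

theorem eval_mem_den {ξ : ℕ → BTy → Prop} {Γ : List BTy} {T : Lam} {φ : BTy}
    (h : BPlus ξ Γ T φ) (hM : M.AbsClosed) (hξ : ∀ c σ, ξ c σ → M.const c ∈ M.den σ)
    {θ : ℕ → D} (hθ : M.Satisfies Γ θ) : M.eval T θ ∈ M.den φ := by
  induction h generalizing θ with
  | var hn => exact hθ _ _ hn
  | const hc => exact hξ _ _ hc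
  | cx => exact fun _ _ _ _ => trivial
  | cty => exact fun _ _ _ _ => trivial
  | abs _ ih => exact hM _ _ _ fun _ hd => ih (hθ.extend M hd)
  | app _ _ ihM ihN => exact ihM hθ (ihN hθ)
  | interI _ _ ih₁ ih₂ => exact ⟨ih₁ hθ, ih₂ hθ⟩
  | interEl _ ih => exact (ih hθ).1
  | interEr _ ih => exact (ih hθ).2
  | unionIl _ ih => exact Or.inl (ih hθ)
  | unionIr _ ih => exact Or.inr (ih hθ)
  | unionE _ _ _ ih₁ ih₂ ih₃ =>
    rw [eval_subst_zero]
    exact (ih₃ hθ).elim (fun hd => ih₁ (hθ.extend M hd)) (fun hd => ih₂ (hθ.extend M hd))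
  | sub _ hst ih => exact M.den_subset_of_subB hst (ih hθ)

end LamModel

theorem BPlus.app_app_same_of_union {ξ : ℕ → BTy → Prop} {Γ : List BTy} {n : ℕ} {N : Lam}
    {σ₁ σ₂ τ : BTy} (hx : Γ[n]? = some (.inter (.arr σ₁ (.arr σ₁ τ)) (.arr σ₂ (.arr σ₂ τ))))
    (hN : BPlus ξ Γ N (.union σ₁ σ₂)) : BPlus ξ Γ (.app (.app (.var n) N) N) τ := by
  have h₁ : BPlus ξ (σ₁ :: Γ) (.app (.app (.var (n + 1)) (.var 0)) (.var 0)) τ :=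
    .app (.app (.interEl (.var hx)) (.var rfl)) (.var rfl)
  have h₂ : BPlus ξ (σ₂ :: Γ) (.app (.app (.var (n + 1)) (.var 0)) (.var 0)) τ :=
    .app (.app (.interEr (.var hx)) (.var rfl)) (.var rfl)
  simpa [Lam.subst] using BPlus.unionE h₁ h₂ hN

namespace Pierce

/-- `z'` has every type of `z`, and `y` sends `z, z'` to `s₁, s₂` while `y'` sends `z` to `s₂`;
hence `y'` has every type of `y`. This is what makes it sound to interpret every abstraction whose
body fixes `y` (such as `I`) by `ident`, which sends `y` to `y'`. -/
inductive D : Type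
  | bot | z | z' | y | y' | s₁ | s₂ | x | xs₁ | xs₂ | t | junk | ident
  deriving DecidableEq

def app : D → D → D
  | .y, .z => .s₁
  | .y, .z' => .s₂
  | .y', .z => .s₂
  | .ident, .y => .y'
  | .x, .s₁ => .xs₁
  | .x, .s₂ => .xs₂
  | .xs₁, .s₁ => .t
  | .xs₁, .s₂ => .junk
  | .xs₂, .s₂ => .t
  | .xs₂, .s₁ => .junk
  | _, _ => .bot

def atom : ℕ → Set D
  | 0 => {.bot, .s₁}
  | 1 => {.bot, .s₂}
  | 2 => {.bot, .t}
  | 3 => {.bot, .z, .z'}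
  | _ + 4 => {.bot}

def model : LamModel D where
  app := app
  lam f := if f .y = .y then .ident else .bot
  const _ := .bot
  cx := .bot
  cty _ := .bot
  atom := atom

theorem bot_app (d : D) : app .bot d = .bot := by
  cases d <;> rfl

theorem bot_mem_den (φ : BTy) : D.bot ∈ model.den φ := by
  induction φ with
  | atom a => rcases a with _ | _ | _ | _ | a <;> simp [model, LamModel.den, atom]
  | top => trivial
  | arr σ τ _ ihτ => exact fun d _ => (bot_app d).symm ▸ ihτ
  | inter σ τ ihσ ihτ => exact ⟨ihσ, ihτ⟩
  | union σ τ ihσ _ => exact Or.inl ihσ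

theorem z'_mem_den_of_z_mem (φ : BTy) (h : D.z ∈ model.den φ) : D.z' ∈ model.den φ := by
  induction φ with
  | atom a => rcases a with _ | _ | _ | _ | a <;> simp_all [model, LamModel.den, atom]
  | top => trivial
  | arr σ τ _ _ =>
    intro d _
    cases d <;> exact bot_mem_den τ
  | inter σ τ ihσ ihτ => exact ⟨ihσ h.1, ihτ h.2⟩
  | union σ τ ihσ ihτ => exact h.imp ihσ ihτ

theorem y'_mem_den_of_y_mem (φ : BTy) (h : D.y ∈ model.den φ) : D.y' ∈ model.den φ := by
  induction φ with
  | atom a => rcases a with _ | _ | _ | _ | a <;> simp_all [model, LamModel.den, atom]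
  | top => trivial
  | arr σ τ _ _ =>
    intro d hd
    cases d
    case z => exact h (z'_mem_den_of_z_mem σ hd)
    all_goals exact bot_mem_den τ
  | inter σ τ ihσ ihτ => exact ⟨ihσ h.1, ihτ h.2⟩
  | union σ τ ihσ ihτ => exact h.imp ihσ ihτ

theorem absClosed_model : model.AbsClosed := by
  intro σ τ f hf d hd
  change app (if f .y = .y then .ident else .bot) d ∈ model.den τ
  split_ifs with hfy
  · by_cases hd' : d = .y
    · subst hd'
      exact y'_mem_den_of_y_mem τ (hfy ▸ hf hd)
    · cases d <;> first | exact absurd rfl hd' | exact bot_mem_den τ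
  · exact (bot_app d).symm ▸ bot_mem_den τ

def env (n : ℕ) : D := [.z, .y, .x].getD n .bot

theorem satisfies_env :
    model.Satisfies [.atom 3, .arr (.atom 3) (.union (.atom 0) (.atom 1)),
      .inter (.arr (.atom 0) (.arr (.atom 0) (.atom 2))) (.arr (.atom 1) (.arr (.atom 1) (.atom 2)))]
      env := by
  rintro (_ | _ | _ | n) σ ⟨⟩
  all_goals simp [env, model, LamModel.den, atom, Set.MapsTo, app]

theorem not_typable_of_eval_eq_junk {ξ : ℕ → BTy → Prop} {Γ : List BTy}
    (hΓ : model.Satisfies Γ env) {T : Lam} (hT : model.eval T env = .junk) :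
    ¬ BPlus ξ Γ T (.atom 2) := by
  intro h
  have hmem := model.eval_mem_den h absClosed_model (fun _ _ _ => bot_mem_den _) hΓ
  rw [hT] at hmem
  simp [model, LamModel.den, atom] at hmem

end Pierce

/-- Pierce's counterexample to one-step subject reduction in system B.
    Context (de Bruijn: x = var 2, y = var 1, z = var 0):
    x : (σ₁→σ₁→τ) ∩ (σ₂→σ₂→τ), y : ρ → σ₁∪σ₂, z : ρ, with σ₁ = atom 0,
    σ₂ = atom 1, τ = atom 2, ρ = atom 3.  Both x((Iy)z)((Iy)z) and x(yz)(yz)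
    have type τ, but the one-step reducts x(yz)((Iy)z) and x((Iy)z)(yz)
    do not. -/
theorem pierce_subject_reduction_counterexample :
    let σ₁ : BTy := .atom 0
    let σ₂ : BTy := .atom 1
    let τ : BTy := .atom 2
    let ρ : BTy := .atom 3
    let Γ : List BTy :=
      [ρ, .arr ρ (.union σ₁ σ₂),
       .inter (.arr σ₁ (.arr σ₁ τ)) (.arr σ₂ (.arr σ₂ τ))]
    let I : Lam := .lam (.var 0)
    let iyz : Lam := .app (.app I (.var 1)) (.var 0)
    let yz : Lam := .app (.var 1) (.var 0)
    BPlus (fun _ _ => False) Γ (.app (.app (.var 2) iyz) iyz) τ ∧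
    BPlus (fun _ _ => False) Γ (.app (.app (.var 2) yz) yz) τ ∧
    ¬ BPlus (fun _ _ => False) Γ (.app (.app (.var 2) yz) iyz) τ ∧
    ¬ BPlus (fun _ _ => False) Γ (.app (.app (.var 2) iyz) yz) τ := by
  intro σ₁ σ₂ τ ρ Γ I iyz yz
  have hiyz : BPlus (fun _ _ => False) Γ iyz (.union σ₁ σ₂) :=
    .app (.app (.abs (.var rfl)) (.var rfl)) (.var rfl)
  have hyz : BPlus (fun _ _ => False) Γ yz (.union σ₁ σ₂) := .app (.var rfl) (.var rfl)
  exact ⟨.app_app_same_of_union rfl hiyz, .app_app_same_of_union rfl hyz,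
    Pierce.not_typable_of_eval_eq_junk Pierce.satisfies_env rfl,
    Pierce.not_typable_of_eval_eq_junk Pierce.satisfies_env rfl⟩

end LFDelta
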